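/- Let F be a genealogical tree in ℤ^m and λ ∈ ⟨F⟩ = span_ℤ(F). If all elements of the support of λ except at most two belong to a single generation A_i, then λ is an integer multiple of a single abstract family of F. -/

import Mathlib

/-!
Write `λ = ∑ c f • f.vec`. By uniqueness of parent and child families, the coordinate of `λ`
at `j` is `c (parent family of j) - c (child family of j)`.

Suppose every family in the support of `c` has generation at least `i`, and let `f` have
maximal generation. Its two children carry `-c f ≠ 0` outside `A_i`, so they use up both
allowed exceptions; hence `f` is alone in its generation and all other coordinates outside
`A_i` vanish. If some family had smaller generation, `λ` would vanish on the whole generation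
of `f`, and going down from `f.j1` to its child family and up again through its sibling
would yield a second family of that generation (as the sibling is not the spouse).

A family below `A_i` and one at or above `A_i` cannot coexist: the parents of a minimal family
and a child of a maximal one would be three exceptions. The remaining case, all families below
`A_i`, becomes the first one under the time reversal `j ↦ m - 1 - j`.
-/

/-- The (1-indexed) generation number of a basis index `j` of `ℤ^(N·2^(N−1))`:
`e_j ∈ A_i` iff `(i−1)·2^(N−1) + 1 ≤ j + 1 ≤ i·2^(N−1)` (0-indexed `j`). -/
def genOf (N : ℕ) (j : Fin (N * 2 ^ (N - 1))) : ℕ := (j : ℕ) / 2 ^ (N - 1) + 1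

/-- An abstract family: two distinct parents in generation `gen` and two distinct
children in generation `gen + 1`, with `1 ≤ gen ≤ N − 1`. -/
structure AbstractFamily (N : ℕ) where
  gen : ℕ
  j1 : Fin (N * 2 ^ (N - 1))
  j2 : Fin (N * 2 ^ (N - 1))
  j3 : Fin (N * 2 ^ (N - 1))
  j4 : Fin (N * 2 ^ (N - 1))
  gen_pos : 1 ≤ gen
  gen_le : gen ≤ N - 1
  hj1 : genOf N j1 = gen
  hj2 : genOf N j2 = gen
  hj3 : genOf N j3 = gen + 1
  hj4 : genOf N j4 = gen + 1
  parents_ne : j1 ≠ j2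
  children_ne : j3 ≠ j4

/-- The vector `e_{j₁} + e_{j₂} − e_{j₃} − e_{j₄} ∈ ℤ^m` associated to an abstract family. -/
def AbstractFamily.vec {N : ℕ} (f : AbstractFamily N) : Fin (N * 2 ^ (N - 1)) → ℤ :=
  Pi.single f.j1 1 + Pi.single f.j2 1 - Pi.single f.j3 1 - Pi.single f.j4 1

/-- `j` is a parent in the family `f`. -/
def AbstractFamily.isParent {N : ℕ} (f : AbstractFamily N)
    (j : Fin (N * 2 ^ (N - 1))) : Prop := j = f.j1 ∨ j = f.j2

/-- `j` is a child in the family `f`. -/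
def AbstractFamily.isChild {N : ℕ} (f : AbstractFamily N)
    (j : Fin (N * 2 ^ (N - 1))) : Prop := j = f.j3 ∨ j = f.j4

/-- A genealogical tree: every basis vector of generation `i ≤ N−1` is a parent in
exactly one family of generation number `i`; every basis vector of generation `i ≥ 2`
is a child in exactly one family of generation number `i−1`; and the sibling and the
spouse of a basis vector never coincide. -/
structure IsGenTree (N : ℕ) (F : Set (AbstractFamily N)) : Prop where
  parent_unique : ∀ j : Fin (N * 2 ^ (N - 1)), genOf N j ≤ N - 1 →
    ∃! f : AbstractFamily N, f ∈ F ∧ f.gen = genOf N j ∧ f.isParent j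
  child_unique : ∀ j : Fin (N * 2 ^ (N - 1)), 2 ≤ genOf N j →
    ∃! f : AbstractFamily N, f ∈ F ∧ f.gen = genOf N j - 1 ∧ f.isChild j
  sibling_ne_spouse : ∀ f ∈ F, ∀ g ∈ F, ∀ c s p : Fin (N * 2 ^ (N - 1)),
    ((c = f.j3 ∧ s = f.j4) ∨ (c = f.j4 ∧ s = f.j3)) →
    ((c = g.j1 ∧ p = g.j2) ∨ (c = g.j2 ∧ p = g.j1)) → s ≠ p

lemma Nat.sub_succ_div_eq {n b j : ℕ} (hj : j < n * b) :
    (n * b - (j + 1)) / b = n - 1 - j / b := by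
  have hb : 0 < b := Nat.pos_of_ne_zero (by rintro rfl; simp at hj)
  obtain ⟨k, rfl⟩ : ∃ k, n = j / b + 1 + k := ⟨n - (j / b + 1), by
    have := Nat.div_lt_of_lt_mul (mul_comm n b ▸ hj); omega⟩
  have h1 := Nat.div_add_mod j b
  have h2 := Nat.mod_lt j hb
  generalize j / b = q at *
  generalize j % b = r at *
  subst h1
  rw [show q + 1 + k - 1 - q = k by omega]
  apply Nat.div_eq_of_lt_le
  · rw [add_mul, add_mul, one_mul, mul_comm b q]; omega
  · rw [add_mul, add_mul, add_mul, one_mul, mul_comm b q]; omega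

section genOf

variable {N : ℕ} (j : Fin (N * 2 ^ (N - 1)))

lemma one_le_genOf : 1 ≤ genOf N j :=
  Nat.le_add_left 1 _

lemma genOf_le : genOf N j ≤ N := by
  have : (j : ℕ) / 2 ^ (N - 1) < N := Nat.div_lt_of_lt_mul (mul_comm N _ ▸ j.isLt)
  unfold genOf; omega

lemma genOf_rev : genOf N j.rev = N + 1 - genOf N j := by
  have := genOf_le j
  unfold genOf at *
  rw [Fin.val_rev, Nat.sub_succ_div_eq j.isLt]
  omega

end genOf

namespace AbstractFamily

open Finsupp

variable {N : ℕ} {f : AbstractFamily N} {j : Fin (N * 2 ^ (N - 1))}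

instance (f : AbstractFamily N) (j : Fin (N * 2 ^ (N - 1))) : Decidable (f.isParent j) :=
  inferInstanceAs (Decidable (_ ∨ _))

instance (f : AbstractFamily N) (j : Fin (N * 2 ^ (N - 1))) : Decidable (f.isChild j) :=
  inferInstanceAs (Decidable (_ ∨ _))

lemma genOf_of_isParent (h : f.isParent j) : genOf N j = f.gen := by
  rcases h with rfl | rfl
  exacts [f.hj1, f.hj2]

lemma genOf_of_isChild (h : f.isChild j) : genOf N j = f.gen + 1 := by
  rcases h with rfl | rfl
  exacts [f.hj3, f.hj4]

lemma vec_apply (f : AbstractFamily N) (j : Fin (N * 2 ^ (N - 1))) :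
    f.vec j = (if f.isParent j then 1 else 0) - (if f.isChild j then 1 else 0) := by
  have hP := fun h => genOf_of_isParent (f := f) (j := j) h
  have hC := fun h => genOf_of_isChild (f := f) (j := j) h
  have := f.parents_ne
  have := f.children_ne
  simp only [vec, isParent, isChild, Pi.add_apply, Pi.sub_apply, Pi.single_apply] at *
  split_ifs <;> grind

lemma linearCombination_vec_apply (c : AbstractFamily N →₀ ℤ) (j : Fin (N * 2 ^ (N - 1))) :
    linearCombination ℤ vec c j =
      ∑ f ∈ c.support with f.isParent j, c f - ∑ f ∈ c.support with f.isChild j, c f := by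
  simp only [linearCombination_apply, Finsupp.sum, Finset.sum_apply, Pi.smul_apply, vec_apply,
    smul_eq_mul, mul_sub, mul_ite, mul_one, mul_zero, Finset.sum_sub_distrib, Finset.sum_filter]

def reverse (f : AbstractFamily N) : AbstractFamily N where
  gen := N - f.gen
  j1 := f.j3.rev
  j2 := f.j4.rev
  j3 := f.j1.rev
  j4 := f.j2.rev
  gen_pos := by have := f.gen_le; have := f.gen_pos; omega
  gen_le := by have := f.gen_pos; omega
  hj1 := by rw [genOf_rev, f.hj3]; omega
  hj2 := by rw [genOf_rev, f.hj4]; omega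
  hj3 := by have := f.gen_le; have := f.gen_pos; rw [genOf_rev, f.hj1]; omega
  hj4 := by have := f.gen_le; have := f.gen_pos; rw [genOf_rev, f.hj2]; omega
  parents_ne := Fin.rev_injective.ne f.children_ne
  children_ne := Fin.rev_injective.ne f.parents_ne

@[simp]
lemma reverse_reverse (f : AbstractFamily N) : f.reverse.reverse = f := by
  obtain ⟨gen, _, _, _, _, -, gen_le⟩ := f
  simp only [reverse, Fin.rev_rev, mk.injEq, and_true]
  omega

lemma reverse_involutive : Function.Involutive (reverse (N := N)) := reverse_reverse

@[simp]
lemma isParent_reverse : f.reverse.isParent j ↔ f.isChild j.rev := by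
  simp only [isParent, isChild, reverse, Fin.rev_eq_iff]

@[simp]
lemma isChild_reverse : f.reverse.isChild j ↔ f.isParent j.rev := by
  simp only [isParent, isChild, reverse, Fin.rev_eq_iff]

lemma vec_reverse_apply : f.reverse.vec j = -f.vec j.rev := by
  simp only [vec_apply, isParent_reverse, isChild_reverse, neg_sub]

lemma linearCombination_vec_mapDomain_reverse (c : AbstractFamily N →₀ ℤ)
    (j : Fin (N * 2 ^ (N - 1))) :
    linearCombination ℤ vec (c.mapDomain reverse) j = -linearCombination ℤ vec c j.rev := by
  rw [linearCombination_mapDomain]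
  simp only [linearCombination_apply, Finsupp.sum, Finset.sum_apply, Pi.smul_apply,
    Function.comp_apply, vec_reverse_apply, smul_neg, Finset.sum_neg_distrib]

end AbstractFamily

lemma Finset.eq_or_eq_of_card_le_two {α : Type*} {s : Finset α} (hs : s.card ≤ 2) {a b d : α}
    (ha : a ∈ s) (hb : b ∈ s) (hab : a ≠ b) (hd : d ∈ s) : d = a ∨ d = b := by
  by_contra! h
  exact hs.not_gt (Finset.two_lt_card.2 ⟨a, ha, b, hb, d, hd, hab, h.1.symm, h.2.symm⟩)

namespace IsGenTree

open AbstractFamily Finsupp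

variable {N : ℕ} {F : Set (AbstractFamily N)} {c : AbstractFamily N →₀ ℤ}

lemma eq_of_isParent (hF : IsGenTree N F) {f g : AbstractFamily N} (hf : f ∈ F) (hg : g ∈ F)
    {j : Fin (N * 2 ^ (N - 1))} (hfj : f.isParent j) (hgj : g.isParent j) : f = g := by
  obtain ⟨u, -, hu⟩ := hF.parent_unique j (genOf_of_isParent hfj ▸ f.gen_le)
  rw [hu f ⟨hf, (genOf_of_isParent hfj).symm, hfj⟩, hu g ⟨hg, (genOf_of_isParent hgj).symm, hgj⟩]

lemma eq_of_isChild (hF : IsGenTree N F) {f g : AbstractFamily N} (hf : f ∈ F) (hg : g ∈ F)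
    {j : Fin (N * 2 ^ (N - 1))} (hfj : f.isChild j) (hgj : g.isChild j) : f = g := by
  have hfgen := genOf_of_isChild hfj
  have hggen := genOf_of_isChild hgj
  obtain ⟨u, -, hu⟩ := hF.child_unique j (by have := f.gen_pos; omega)
  rw [hu f ⟨hf, by omega, hfj⟩, hu g ⟨hg, by omega, hgj⟩]

lemma nonempty (hF : IsGenTree N F) (hN : 2 ≤ N) : F.Nonempty := by
  have hm : 0 < N * 2 ^ (N - 1) := by positivity
  obtain ⟨f, ⟨hf, -⟩, -⟩ := hF.parent_unique ⟨0, hm⟩ (by simp only [genOf, Nat.zero_div]; omega)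
  exact ⟨f, hf⟩

lemma reverse (hF : IsGenTree N F) : IsGenTree N (AbstractFamily.reverse ⁻¹' F) where
  parent_unique j hj := by
    obtain ⟨g, ⟨hgF, -, hgj⟩, hg⟩ :=
      hF.child_unique j.rev (by rw [genOf_rev]; have := one_le_genOf j; omega)
    have hgj' : g.reverse.isParent j := by simpa
    refine ⟨g.reverse, ⟨by simpa, (genOf_of_isParent hgj').symm, hgj'⟩, ?_⟩
    rintro f ⟨hfF, -, hfj⟩
    have hfj' : f.reverse.isChild j.rev := by simpa
    rw [← hg f.reverse ⟨hfF, by have := genOf_of_isChild hfj'; omega, hfj'⟩, reverse_reverse]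
  child_unique j hj := by
    obtain ⟨g, ⟨hgF, -, hgj⟩, hg⟩ :=
      hF.parent_unique j.rev (by rw [genOf_rev]; have := genOf_le j; omega)
    have hgj' : g.reverse.isChild j := by simpa
    refine ⟨g.reverse, ⟨by simpa, by have := genOf_of_isChild hgj'; omega, hgj'⟩, ?_⟩
    rintro f ⟨hfF, -, hfj⟩
    have hfj' : f.reverse.isParent j.rev := by simpa
    rw [← hg f.reverse ⟨hfF, (genOf_of_isParent hfj').symm, hfj'⟩, reverse_reverse]
  sibling_ne_spouse f hf g hg c s p hcs hcp := by
    have := hF.sibling_ne_spouse g.reverse hg f.reverse hf c.rev p.rev s.rev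
      (by simpa [AbstractFamily.reverse] using hcp) (by simpa [AbstractFamily.reverse] using hcs)
    exact fun h => this (h ▸ rfl)

lemma sum_isParent_eq (hF : IsGenTree N F) (hc : ↑c.support ⊆ F) {f : AbstractFamily N}
    (hf : f ∈ F) {j : Fin (N * 2 ^ (N - 1))} (hj : f.isParent j) :
    ∑ g ∈ c.support with g.isParent j, c g = c f := by
  rw [Finset.sum_filter, Finset.sum_eq_single f, if_pos hj]
  · exact fun g hg hgf => if_neg fun hgj => hgf (hF.eq_of_isParent (hc hg) hf hgj hj)
  · simp +contextual

lemma sum_isChild_eq (hF : IsGenTree N F) (hc : ↑c.support ⊆ F) {f : AbstractFamily N}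
    (hf : f ∈ F) {j : Fin (N * 2 ^ (N - 1))} (hj : f.isChild j) :
    ∑ g ∈ c.support with g.isChild j, c g = c f := by
  rw [Finset.sum_filter, Finset.sum_eq_single f, if_pos hj]
  · exact fun g hg hgf => if_neg fun hgj => hgf (hF.eq_of_isChild (hc hg) hf hgj hj)
  · simp +contextual

lemma linearCombination_vec_apply_eq_sub (hF : IsGenTree N F) (hc : ↑c.support ⊆ F)
    {f g : AbstractFamily N} (hf : f ∈ F) (hg : g ∈ F) {j : Fin (N * 2 ^ (N - 1))}
    (hfj : f.isParent j) (hgj : g.isChild j) :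
    linearCombination ℤ vec c j = c f - c g := by
  rw [linearCombination_vec_apply, hF.sum_isParent_eq hc hf hfj, hF.sum_isChild_eq hc hg hgj]

lemma linearCombination_vec_apply_of_isParent_of_gen_le (hF : IsGenTree N F)
    (hc : ↑c.support ⊆ F) {f : AbstractFamily N} (hf : f ∈ c.support)
    (hmin : ∀ g ∈ c.support, f.gen ≤ g.gen) {j : Fin (N * 2 ^ (N - 1))} (hj : f.isParent j) :
    linearCombination ℤ vec c j = c f := by
  rw [linearCombination_vec_apply, hF.sum_isParent_eq hc (hc hf) hj, Finset.sum_eq_zero, sub_zero]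
  intro g hg
  rw [Finset.mem_filter] at hg
  have := hmin g hg.1
  have := genOf_of_isChild hg.2
  have := genOf_of_isParent hj
  omega

lemma linearCombination_vec_apply_of_isChild_of_le_gen (hF : IsGenTree N F)
    (hc : ↑c.support ⊆ F) {f : AbstractFamily N} (hf : f ∈ c.support)
    (hmax : ∀ g ∈ c.support, g.gen ≤ f.gen) {j : Fin (N * 2 ^ (N - 1))} (hj : f.isChild j) :
    linearCombination ℤ vec c j = -c f := by
  rw [linearCombination_vec_apply, hF.sum_isChild_eq hc (hc hf) hj, Finset.sum_eq_zero, zero_sub]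
  intro g hg
  rw [Finset.mem_filter] at hg
  have := hmax g hg.1
  have := genOf_of_isParent hg.2
  have := genOf_of_isChild hj
  omega

/-- Going from `f` down to the child family `g₁` of `f.j1` and back up through the sibling `s`
of `f.j1` to its parent family `g`, the vanishing coordinates force `c g = c g₁ = c f`; and
`g = f` would make `s` the spouse of `f.j1`. -/
lemma exists_ne_of_linearCombination_vec_eq_zero (hF : IsGenTree N F) (hc : ↑c.support ⊆ F)
    {f : AbstractFamily N} (hf : f ∈ c.support) (hgen : 2 ≤ f.gen)
    (hzero : ∀ j, genOf N j = f.gen → linearCombination ℤ vec c j = 0) :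
    ∃ g ∈ c.support, g.gen = f.gen ∧ g ≠ f := by
  obtain ⟨g₁, ⟨hg₁F, -, hg₁⟩, -⟩ := hF.child_unique f.j1 (f.hj1 ▸ hgen)
  obtain ⟨s, hs⟩ : ∃ s, (f.j1 = g₁.j3 ∧ s = g₁.j4) ∨ (f.j1 = g₁.j4 ∧ s = g₁.j3) := by
    rcases hg₁ with h | h
    exacts [⟨_, .inl ⟨h, rfl⟩⟩, ⟨_, .inr ⟨h, rfl⟩⟩]
  have hsg₁ : g₁.isChild s := by
    rcases hs with ⟨-, rfl⟩ | ⟨-, rfl⟩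
    exacts [.inr rfl, .inl rfl]
  have hs_gen : genOf N s = f.gen := by
    rw [genOf_of_isChild hsg₁, ← genOf_of_isChild hg₁, f.hj1]
  obtain ⟨g, ⟨hgF, -, hsg⟩, -⟩ := hF.parent_unique s (hs_gen ▸ f.gen_le)
  have hcg₁ : c g₁ = c f := by
    have := hF.linearCombination_vec_apply_eq_sub hc (hc hf) hg₁F (.inl rfl) hg₁
    rw [hzero _ f.hj1] at this
    omega
  have hcg : c g = c g₁ := by
    have := hF.linearCombination_vec_apply_eq_sub hc hgF hg₁F hsg hsg₁
    rw [hzero _ hs_gen] at this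
    omega
  refine ⟨g, mem_support_iff.2 (hcg.trans hcg₁ ▸ mem_support_iff.1 hf),
    (genOf_of_isParent hsg).symm.trans hs_gen, fun hgf => ?_⟩
  rw [hgf] at hsg
  rcases hsg with h | h
  · exact g₁.children_ne (by rcases hs with ⟨h1, h2⟩ | ⟨h1, h2⟩ <;> simp_all)
  · exact hF.sibling_ne_spouse g₁ hg₁F f (hc hf) f.j1 s f.j2 hs (.inl ⟨rfl, rfl⟩) h

lemma card_support_le_one_of_le_gen (hF : IsGenTree N F) (hc : ↑c.support ⊆ F) {i : ℕ}
    (hsupp : (Finset.univ.filter fun j =>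
      linearCombination ℤ vec c j ≠ 0 ∧ genOf N j ≠ i).card ≤ 2)
    (hle : ∀ f ∈ c.support, i ≤ f.gen) : c.support.card ≤ 1 := by
  set S := Finset.univ.filter fun j => linearCombination ℤ vec c j ≠ 0 ∧ genOf N j ≠ i
  rcases c.support.eq_empty_or_nonempty with h | hne
  · simp [h]
  obtain ⟨f, hf, hmax⟩ := c.support.exists_max_image gen hne
  have hchild_mem : ∀ g ∈ c.support, g.gen = f.gen → ∀ j, g.isChild j → j ∈ S := by
    intro g hg hgf j hj
    have := hle g hg
    simp only [S, Finset.mem_filter, Finset.mem_univ, true_and,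
      hF.linearCombination_vec_apply_of_isChild_of_le_gen hc hg (hgf ▸ hmax) hj,
      genOf_of_isChild hj]
    exact ⟨neg_ne_zero.2 (mem_support_iff.1 hg), by omega⟩
  have hS : ∀ j ∈ S, f.isChild j := fun j hj =>
    Finset.eq_or_eq_of_card_le_two hsupp (hchild_mem f hf rfl _ (.inl rfl))
      (hchild_mem f hf rfl _ (.inr rfl)) f.children_ne hj
  have hunique : ∀ g ∈ c.support, g.gen = f.gen → g = f := fun g hg hgf =>
    hF.eq_of_isChild (hc hg) (hc hf) (.inl rfl) (hS _ (hchild_mem g hg hgf _ (.inl rfl)))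
  have hgen : ∀ g ∈ c.support, g.gen = f.gen := by
    intro g hg
    by_contra hgf
    have hlt : i ≤ g.gen ∧ g.gen < f.gen := ⟨hle g hg, lt_of_le_of_ne (hmax g hg) hgf⟩
    obtain ⟨g', hg', hg'f, hne⟩ := hF.exists_ne_of_linearCombination_vec_eq_zero hc hf
      (by have := g.gen_pos; omega) fun j hj => by
        by_contra h
        have := genOf_of_isChild (hS j (by simp only [S, Finset.mem_filter, Finset.mem_univ, true_and]; omega))
        omega
    exact hne (hunique g' hg' hg'f)
  exact Finset.card_le_one.2 fun a ha b hb =>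
    (hunique a ha (hgen a ha)).trans (hunique b hb (hgen b hb)).symm

lemma forall_le_gen_or_forall_gen_lt (hF : IsGenTree N F) (hc : ↑c.support ⊆ F) {i : ℕ}
    (hsupp : (Finset.univ.filter fun j =>
      linearCombination ℤ vec c j ≠ 0 ∧ genOf N j ≠ i).card ≤ 2) :
    (∀ f ∈ c.support, i ≤ f.gen) ∨ ∀ f ∈ c.support, f.gen < i := by
  set S := Finset.univ.filter fun j => linearCombination ℤ vec c j ≠ 0 ∧ genOf N j ≠ i
  by_contra! ⟨⟨f₁, hf₁, hf₁i⟩, ⟨f₂, hf₂, hf₂i⟩⟩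
  obtain ⟨f, hf, hmin⟩ := c.support.exists_min_image gen ⟨f₁, hf₁⟩
  obtain ⟨g, hg, hmax⟩ := c.support.exists_max_image gen ⟨f₁, hf₁⟩
  have hparent_mem : ∀ j, f.isParent j → j ∈ S := by
    intro j hj
    have := hmin f₁ hf₁
    simp only [S, Finset.mem_filter, Finset.mem_univ, true_and,
      hF.linearCombination_vec_apply_of_isParent_of_gen_le hc hf hmin hj, genOf_of_isParent hj]
    exact ⟨mem_support_iff.1 hf, by omega⟩
  have hchild_mem : g.j3 ∈ S := by
    have := hmax f₂ hf₂
    simp only [S, Finset.mem_filter, Finset.mem_univ, true_and,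
      hF.linearCombination_vec_apply_of_isChild_of_le_gen hc hg hmax (.inl rfl), g.hj3]
    exact ⟨neg_ne_zero.2 (mem_support_iff.1 hg), by omega⟩
  have hne : ∀ j, f.isParent j → g.j3 ≠ j := fun j hj h => by
    have := hmin g hg
    have := genOf_of_isParent hj
    rw [← h, g.hj3] at this
    omega
  exact (Finset.eq_or_eq_of_card_le_two hsupp (hparent_mem _ (.inl rfl))
    (hparent_mem _ (.inr rfl)) f.parents_ne hchild_mem).elim (hne _ (.inl rfl)) (hne _ (.inr rfl))

lemma card_support_le_one (hF : IsGenTree N F) (hc : ↑c.support ⊆ F) {i : ℕ}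
    (hsupp : (Finset.univ.filter fun j =>
      linearCombination ℤ vec c j ≠ 0 ∧ genOf N j ≠ i).card ≤ 2) : c.support.card ≤ 1 := by
  classical
  rcases hF.forall_le_gen_or_forall_gen_lt hc hsupp with hle | hlt
  · exact hF.card_support_le_one_of_le_gen hc hsupp hle
  have hinj := reverse_involutive (N := N).injective
  rw [← Finset.card_image_of_injective _ hinj, ← mapDomain_support_of_injective hinj]
  refine hF.reverse.card_support_le_one_of_le_gen (i := N + 1 - i) ?_ (le_of_eq_of_le ?_ hsupp) ?_
  · rw [mapDomain_support_of_injective hinj, Finset.coe_image]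
    rintro _ ⟨g, hg, rfl⟩
    simpa using hc hg
  · refine Finset.card_equiv Fin.revPerm fun j => ?_
    have := genOf_le j
    have := one_le_genOf j
    simp only [Finset.mem_filter, Finset.mem_univ, true_and, Fin.revPerm_apply,
      linearCombination_vec_mapDomain_reverse, neg_ne_zero, genOf_rev]
    omega
  · rw [mapDomain_support_of_injective hinj]
    intro f hf
    obtain ⟨g, hg, rfl⟩ := Finset.mem_image.1 hf
    have := hlt g hg
    simp only [AbstractFamily.reverse]
    omega

end IsGenTree

/-- If `λ ∈ ⟨F⟩ = span_ℤ(F)` and all elements of the support of `λ` except at most two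
belong to the single generation `A_i`, then `λ` is an integer multiple of the vector of
a single abstract family of `F`. -/
theorem stmt8 (N : ℕ) (hN : 2 ≤ N) (F : Set (AbstractFamily N)) (hF : IsGenTree N F)
    (lam : Fin (N * 2 ^ (N - 1)) → ℤ)
    (hspan : lam ∈ Submodule.span ℤ (AbstractFamily.vec '' F))
    (i : ℕ)
    (hsupp : (Finset.univ.filter fun j => lam j ≠ 0 ∧ genOf N j ≠ i).card ≤ 2) :
    ∃ f ∈ F, ∃ c : ℤ, lam = c • f.vec := by
  obtain ⟨c, hc, rfl⟩ := (Finsupp.mem_span_image_iff_linearCombination ℤ).1 hspan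
  rw [Finsupp.mem_supported] at hc
  rcases c.support.eq_empty_or_nonempty with h | ⟨f, hf⟩
  · obtain ⟨f, hf⟩ := hF.nonempty hN
    exact ⟨f, hf, 0, by simp [Finsupp.support_eq_empty.1 h]⟩
  obtain ⟨b, rfl⟩ := Finsupp.support_subset_singleton'.1 fun g hg =>
    Finset.mem_singleton.2 (Finset.card_le_one.1 (hF.card_support_le_one hc hsupp) g hg f hf)
  exact ⟨f, hc hf, b, Finsupp.linearCombination_single ℤ b f⟩
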